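/- For each fixed complex a with |a − 1| < 1, the coefficient sequence D_{2n}(a) satisfies D_{2n}(a) · √(π n³) / 4^n → a/(a−2)² as n → ∞. -/

import Mathlib

/-!
Write `z = a - 1`. After normalization, `D_{2n}(a) √(π n³) / 4ⁿ = ∑ₗ cₙₗ zˡ` with
`cₙₗ = (2ℓ + 1) · n / (n + ℓ + 1) · C(2n, n + ℓ) √(π n) / 4ⁿ`, the terms with `ℓ > n` vanishing.
Wallis' product gives `C(2n, n) √(π n) / 4ⁿ → 1`, and `C(2n, n + ℓ) / C(2n, n) → 1` for fixed `ℓ`,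
so `cₙₗ → 2ℓ + 1`; since `C(2n, n + ℓ) ≤ C(2n, n)`, also `cₙₗ ≤ M (2ℓ + 1)` uniformly in `n`.
As `‖z‖ < 1`, Tannery's theorem yields the limit `∑ₗ (2ℓ + 1) zˡ = (1 + z) / (1 - z)² = a / (a - 2)²`.
-/

open Filter Real

/-- The adsorbing Dyck path partition function `D_{2n}(a)` for complex `a`. -/
noncomputable def dyckPFC (n : ℕ) (a : ℂ) : ℂ :=
  ∑ ℓ ∈ Finset.range (n + 1),
    ((2 * ℓ + 1 : ℂ) / (n + ℓ + 1)) * (Nat.choose (2 * n) (n + ℓ) : ℂ) * (a - 1) ^ ℓ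

open scoped Nat Topology

lemma tendsto_natCast_add_div_natCast_add (c d : ℝ) :
    Tendsto (fun n : ℕ ↦ (n + c) / (n + d)) atTop (𝓝 1) := by
  have h := (tendsto_natCast_div_add_atTop d).div (tendsto_natCast_div_add_atTop c) one_ne_zero
  rw [div_one] at h
  refine h.congr' ?_
  filter_upwards [eventually_ne_atTop 0] with n hn
  exact div_div_div_cancel_left' _ _ (Nat.cast_ne_zero.mpr hn)

lemma hasSum_two_mul_add_one_mul_geometric {𝕜 : Type*} [NormedField 𝕜] [CompleteSpace 𝕜] {r : 𝕜}
    (hr : ‖r‖ < 1) : HasSum (fun ℓ : ℕ ↦ (2 * ℓ + 1) * r ^ ℓ) ((1 + r) / (1 - r) ^ 2) := by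
  have h := ((hasSum_coe_mul_geometric_of_norm_lt_one hr).mul_left 2).add
    (hasSum_geometric_of_norm_lt_one hr)
  have hr1 : 1 - r ≠ 0 := by
    intro h0
    rw [sub_eq_zero] at h0
    simp [← h0] at hr
  rw [show (1 + r) / (1 - r) ^ 2 = 2 * (r / (1 - r) ^ 2) + (1 - r)⁻¹ by field_simp; ring]
  exact h.congr_fun fun ℓ ↦ by ring

lemma Real.Wallis.W_mul_choose_sq (n : ℕ) :
    W n * ((2 * n + 1) * ((2 * n).choose n : ℝ) ^ 2) = 16 ^ n := by
  have hfact : ((2 * n).choose n : ℝ) * n ! * n ! = (2 * n)! := by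
    rw [two_mul]
    exact_mod_cast Nat.add_choose_mul_factorial_mul_factorial n n
  have hchoose : ((2 * n).choose n : ℝ) ≠ 0 := by
    exact_mod_cast (Nat.choose_pos (by omega)).ne'
  rw [W_eq_factorial_ratio, ← hfact, pow_mul]
  field_simp
  norm_num

noncomputable def scaledChoose (n ℓ : ℕ) : ℝ := (2 * n).choose (n + ℓ) * √(π * n) / 4 ^ n

lemma scaledChoose_nonneg (n ℓ : ℕ) : 0 ≤ scaledChoose n ℓ := by
  unfold scaledChoose
  positivity

lemma scaledChoose_le_scaledChoose_zero (n ℓ : ℕ) : scaledChoose n ℓ ≤ scaledChoose n 0 := by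
  unfold scaledChoose
  gcongr
  simpa [show 2 * n / 2 = n by omega] using Nat.choose_le_middle (n + ℓ) (2 * n)

lemma scaledChoose_zero_sq (n : ℕ) :
    scaledChoose n 0 ^ 2 = π / Real.Wallis.W n * (n / (2 * n + 1)) := by
  have hW := Real.Wallis.W_mul_choose_sq n
  have hW0 := (Real.Wallis.W_pos n).ne'
  rw [scaledChoose, div_pow, mul_pow, sq_sqrt (by positivity), add_zero]
  field_simp
  rw [← pow_mul, show (4 : ℝ) ^ (n * 2) = 16 ^ n by rw [pow_mul']; norm_num, ← hW]
  ring

lemma tendsto_scaledChoose_zero : Tendsto (scaledChoose · 0) atTop (𝓝 1) := by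
  have hsq : Tendsto (fun n ↦ scaledChoose n 0 ^ 2) atTop (𝓝 1) := by
    simp_rw [scaledChoose_zero_sq]
    convert! (tendsto_const_nhds.div Real.Wallis.tendsto_W_nhds_pi_div_two
      (by positivity)).mul Stirling.tendsto_self_div_two_mul_self_add_one using 2
    field_simp
  simpa [sqrt_sq (scaledChoose_nonneg _ 0)] using hsq.sqrt

lemma scaledChoose_succ_mul {n ℓ : ℕ} (h : ℓ ≤ n) :
    scaledChoose n (ℓ + 1) * (n + ℓ + 1) = scaledChoose n ℓ * (n - ℓ) := by
  have hrec := Nat.choose_succ_right_eq (2 * n) (n + ℓ)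
  rw [show 2 * n - (n + ℓ) = n - ℓ by omega] at hrec
  have hrec' : ((2 * n).choose (n + ℓ + 1) : ℝ) * (n + ℓ + 1) =
      (2 * n).choose (n + ℓ) * (n - ℓ) := by
    exact_mod_cast hrec
  unfold scaledChoose
  rw [← add_assoc]
  linear_combination √(π * n) / 4 ^ n * hrec'

lemma tendsto_scaledChoose (ℓ : ℕ) : Tendsto (scaledChoose · ℓ) atTop (𝓝 1) := by
  induction ℓ with
  | zero => exact tendsto_scaledChoose_zero
  | succ ℓ ih =>
    have h := ih.mul (tendsto_natCast_add_div_natCast_add (-ℓ) (ℓ + 1))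
    rw [mul_one] at h
    refine h.congr' ?_
    filter_upwards [eventually_ge_atTop ℓ] with n hn
    rw [← sub_eq_add_neg, ← add_assoc, mul_div_assoc', div_eq_iff (by positivity),
      scaledChoose_succ_mul hn]

noncomputable def scaledDyckCoeff (n ℓ : ℕ) : ℝ :=
  (2 * ℓ + 1) * (n / (n + ℓ + 1)) * scaledChoose n ℓ

lemma scaledDyckCoeff_nonneg (n ℓ : ℕ) : 0 ≤ scaledDyckCoeff n ℓ := by
  unfold scaledDyckCoeff
  have := scaledChoose_nonneg n ℓ
  positivity

lemma tendsto_scaledDyckCoeff (ℓ : ℕ) :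
    Tendsto (scaledDyckCoeff · ℓ) atTop (𝓝 (2 * ℓ + 1)) := by
  have h := ((tendsto_natCast_div_add_atTop ((ℓ : ℝ) + 1)).const_mul (2 * ℓ + 1 : ℝ)).mul
    (tendsto_scaledChoose ℓ)
  simpa only [mul_one, scaledDyckCoeff, add_assoc] using h

lemma exists_scaledDyckCoeff_le : ∃ M, ∀ n ℓ, scaledDyckCoeff n ℓ ≤ M * (2 * ℓ + 1) := by
  obtain ⟨M, hM⟩ := tendsto_scaledChoose_zero.bddAbove_range
  refine ⟨M, fun n ℓ ↦ ?_⟩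
  have hratio : (n : ℝ) / (n + ℓ + 1) ≤ 1 := div_le_one_of_le₀ (by linarith) (by positivity)
  calc scaledDyckCoeff n ℓ ≤ (2 * ℓ + 1) * 1 * scaledChoose n 0 := by
        unfold scaledDyckCoeff
        gcongr
        · exact scaledChoose_nonneg n ℓ
        · exact scaledChoose_le_scaledChoose_zero n ℓ
    _ ≤ M * (2 * ℓ + 1) := by
        rw [mul_one, mul_comm]
        gcongr
        exact hM ⟨n, rfl⟩

lemma dyckPFC_mul_sqrt_div_eq_tsum (n : ℕ) (a : ℂ) :
    dyckPFC n a * (√(π * n ^ 3) : ℂ) / 4 ^ n = ∑' ℓ, (scaledDyckCoeff n ℓ : ℂ) * (a - 1) ^ ℓ := by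
  have hsqrt : √(π * n ^ 3) = √(π * n) * n := by
    rw [show π * (n : ℝ) ^ 3 = π * n * n ^ 2 by ring, sqrt_mul (by positivity),
      sqrt_sq (by positivity)]
  rw [tsum_eq_sum (s := Finset.range (n + 1)), dyckPFC, Finset.sum_mul, Finset.sum_div]
  · refine Finset.sum_congr rfl fun ℓ _ ↦ ?_
    simp only [scaledDyckCoeff, scaledChoose, hsqrt]
    push_cast
    ring
  · intro ℓ hℓ
    rw [Finset.mem_range, not_lt] at hℓ
    simp [scaledDyckCoeff, scaledChoose, Nat.choose_eq_zero_of_lt (show 2 * n < n + ℓ by omega)]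

theorem dyckPF_asymptotics_desorbed (a : ℂ) (ha : ‖a - 1‖ < 1) :
    Tendsto (fun n : ℕ => dyckPFC n a * (Real.sqrt (π * n ^ 3) : ℂ) / 4 ^ n) atTop
      (nhds (a / (a - 2) ^ 2)) := by
  obtain ⟨M, hM⟩ := exists_scaledDyckCoeff_le
  have hbound (n ℓ : ℕ) :
      ‖(scaledDyckCoeff n ℓ : ℂ) * (a - 1) ^ ℓ‖ ≤ M * ((2 * ℓ + 1) * ‖a - 1‖ ^ ℓ) := by
    rw [norm_mul, norm_pow, Complex.norm_real, norm_of_nonneg (scaledDyckCoeff_nonneg n ℓ),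
      ← mul_assoc]
    gcongr
    exact hM n ℓ
  have hnorm : ‖‖a - 1‖‖ < 1 := by rwa [norm_norm]
  have hlim := tendsto_tsum_of_dominated_convergence
    ((hasSum_two_mul_add_one_mul_geometric hnorm).summable.mul_left M)
    (fun ℓ ↦ (tendsto_scaledDyckCoeff ℓ).ofReal.mul_const ((a - 1) ^ ℓ))
    (Eventually.of_forall hbound)
  simp_rw [← dyckPFC_mul_sqrt_div_eq_tsum] at hlim
  convert hlim using 2
  push_cast
  rw [(hasSum_two_mul_add_one_mul_geometric ha).tsum_eq]
  ring
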